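/- For every n ∈ ℕ, every k ∈ {0,...,n}, every real r and every real t, one has k! · Σ_{j=k}^n t^j · ⌈n,j⌉_r · ⦃j,k⦄_r = Σ_{m=0}^k (-1)^{k-m} · C(k,m) · Π_{i=0}^{n-1} (r(t+1) + t·m + i), where C(k,m) is the ordinary binomial coefficient and the product over i ∈ {0,...,n-1} is the rising factorial of r(t+1)+tm of length n. -/

import Mathlib

open Finset Filter MeasureTheory

/-- r-Stirling numbers of the first kind. -/
noncomputable def stirFir (r : ℝ) : ℕ → ℕ → ℝ
  | 0, 0 => 1
  | 0, _ + 1 => 0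
  | n + 1, 0 => ((n : ℝ) + r) * stirFir r n 0
  | n + 1, k + 1 => ((n : ℝ) + r) * stirFir r n (k + 1) + stirFir r n k

/-- r-Stirling numbers of the second kind. -/
noncomputable def stirSec (r : ℝ) : ℕ → ℕ → ℝ
  | 0, 0 => 1
  | 0, _ + 1 => 0
  | n + 1, 0 => r * stirSec r n 0
  | n + 1, k + 1 => ((k : ℝ) + 1 + r) * stirSec r n (k + 1) + stirSec r n k

/-- The r-Lah number L(n,k)_r. -/
noncomputable def lahNum (r : ℝ) (n k : ℕ) : ℝ :=
  ∑ j ∈ Finset.Icc k n, stirFir r n j * stirSec r j k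

/-- The probability mass function of the r-Lah distribution. -/
noncomputable def lahPMF (r : ℝ) (n k j : ℕ) : ℝ :=
  stirFir r n j * stirSec r j k / lahNum r n k

/-- The expectation of the r-Lah distribution. -/
noncomputable def lahExp (r : ℝ) (n k : ℕ) : ℝ :=
  (∑ j ∈ Finset.Icc k n, (j : ℝ) * stirFir r n j * stirSec r j k) / lahNum r n k

/-!
Both kinds of r-Stirling numbers are eliminated by closed forms. The explicit formula
`k! ⦃j,k⦄_r = ∑ₘ (-1)^(k-m) C(k,m) (m + r)^j` (a `k`-th finite difference) turns the left-hand
side, after exchanging the sums, into `∑ₘ (-1)^(k-m) C(k,m) ∑ⱼ ⌈n,j⌉_r (t(m + r))^j`, and the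
inner sum is the generating polynomial `∑ⱼ ⌈n,j⌉_r x^j = ∏_{i<n} (x + r + i)` at `x = t(m + r)`.
-/

theorem stirFir_eq_zero_of_lt (r : ℝ) {n k : ℕ} (h : n < k) : stirFir r n k = 0 := by
  induction n generalizing k with
  | zero => obtain _ | k := k <;> simp_all [stirFir]
  | succ n ih =>
    obtain _ | k := k
    · omega
    · rw [stirFir, ih (by omega), ih (by omega), mul_zero, add_zero]

theorem stirSec_eq_zero_of_lt (r : ℝ) {n k : ℕ} (h : n < k) : stirSec r n k = 0 := by
  induction n generalizing k with
  | zero => obtain _ | k := k <;> simp_all [stirSec]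
  | succ n ih =>
    obtain _ | k := k
    · omega
    · rw [stirSec, ih (by omega), ih (by omega), mul_zero, add_zero]

theorem sum_stirFir_mul_pow (r x : ℝ) (n : ℕ) :
    ∑ j ∈ range (n + 1), stirFir r n j * x ^ j = ∏ i ∈ range n, (x + r + i) := by
  induction n with
  | zero => simp [stirFir]
  | succ n ih =>
    have hshift : ∑ j ∈ range (n + 1), stirFir r n (j + 1) * x ^ (j + 1) + stirFir r n 0 =
        ∑ j ∈ range (n + 1), stirFir r n j * x ^ j := by
      have h := sum_range_succ' (fun j => stirFir r n j * x ^ j) (n + 1)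
      rw [sum_range_succ, stirFir_eq_zero_of_lt r n.lt_succ_self, zero_mul, add_zero,
        pow_zero, mul_one] at h
      exact h.symm
    calc ∑ j ∈ range (n + 1 + 1), stirFir r (n + 1) j * x ^ j
        = ((n : ℝ) + r) * (∑ j ∈ range (n + 1), stirFir r n (j + 1) * x ^ (j + 1)
            + stirFir r n 0) + x * ∑ j ∈ range (n + 1), stirFir r n j * x ^ j := by
          rw [sum_range_succ', stirFir, mul_add, mul_sum, mul_sum, add_right_comm,
            ← sum_add_distrib]
          congr 1
          · exact sum_congr rfl fun j _ => by simp only [stirFir]; ring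
          · rw [pow_zero, mul_one]
      _ = ∏ i ∈ range (n + 1), (x + r + i) := by
          rw [hshift, ih, prod_range_succ]; ring

theorem factorial_mul_stirSec (r : ℝ) (j k : ℕ) :
    (k.factorial : ℝ) * stirSec r j k =
      ∑ m ∈ range (k + 1), (-1 : ℝ) ^ (k - m) * k.choose m * ((m : ℝ) + r) ^ j := by
  induction j generalizing k with
  | zero =>
    have hbinom : ∑ m ∈ range (k + 1), (-1 : ℝ) ^ (k - m) * k.choose m * ((m : ℝ) + r) ^ 0 =
        ((1 : ℝ) + -1) ^ k := by
      rw [add_pow]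
      exact sum_congr rfl fun m _ => by ring
    rw [hbinom]
    obtain _ | k := k <;> simp [stirSec]
  | succ j ih =>
    obtain _ | k := k
    · simpa [stirSec, pow_succ, mul_comm] using congrArg (r * ·) (ih 0)
    · have hchoose : ∀ m ≤ k,
          ((k : ℝ) + 1 - m) * (k + 1).choose m = ((k : ℝ) + 1) * k.choose m := by
        intro m hm
        have h := congrArg (Nat.cast (R := ℝ)) (Nat.choose_mul_succ_eq k m)
        push_cast [Nat.cast_sub (show m ≤ k + 1 by omega)] at h
        linarith
      calc ((k + 1).factorial : ℝ) * stirSec r (j + 1) (k + 1)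
          = ((k : ℝ) + 1 + r) * (((k + 1).factorial : ℝ) * stirSec r j (k + 1))
              + ((k : ℝ) + 1) * ((k.factorial : ℝ) * stirSec r j k) := by
            rw [stirSec, Nat.factorial_succ]; push_cast; ring
        _ = _ := by
          rw [ih, ih, sum_range_succ, sum_range_succ _ (k + 1), mul_add, mul_sum, mul_sum,
            add_right_comm, ← sum_add_distrib]
          congr 1
          · refine sum_congr rfl fun m hm => ?_
            have hm : m ≤ k := Nat.lt_succ_iff.mp (mem_range.mp hm)
            rw [Nat.succ_sub hm, pow_succ, pow_succ]
            linear_combination -(-1 : ℝ) ^ (k - m) * ((m : ℝ) + r) ^ j * hchoose m hm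
          · rw [Nat.sub_self, Nat.choose_self]
            push_cast
            ring

theorem generating_sum_rStirling_general (n k : ℕ) (r t : ℝ) :
    (k.factorial : ℝ) * ∑ j ∈ Finset.Icc k n, t ^ j * stirFir r n j * stirSec r j k =
      ∑ m ∈ Finset.range (k + 1), (-1 : ℝ) ^ (k - m) * (k.choose m : ℝ) *
        ∏ i ∈ Finset.range n, (r * (t + 1) + t * (m : ℝ) + (i : ℝ)) := by
  have hextend : ∑ j ∈ Icc k n, t ^ j * stirFir r n j * stirSec r j k =
      ∑ j ∈ range (n + 1), t ^ j * stirFir r n j * stirSec r j k := by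
    refine sum_subset (fun j hj => ?_) fun j _ hj => ?_
    · exact mem_range.mpr (Nat.lt_succ_of_le (mem_Icc.mp hj).2)
    · rw [stirSec_eq_zero_of_lt r (by simp_all), mul_zero]
  calc _ = ∑ j ∈ range (n + 1),
          t ^ j * stirFir r n j * ((k.factorial : ℝ) * stirSec r j k) := by
        rw [hextend, mul_sum]; exact sum_congr rfl fun j _ => by ring
    _ = ∑ m ∈ range (k + 1), (-1 : ℝ) ^ (k - m) * k.choose m *
          ∑ j ∈ range (n + 1), stirFir r n j * (t * (m + r)) ^ j := by
        simp only [factorial_mul_stirSec, mul_sum]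
        rw [sum_comm]
        exact sum_congr rfl fun m _ => sum_congr rfl fun j _ => by rw [mul_pow]; ring
    _ = _ := by
        simp only [sum_stirFir_mul_pow]
        exact sum_congr rfl fun m _ => by congr 1; exact prod_congr rfl fun i _ => by ring

theorem generating_sum_rStirling (n k : ℕ) (hk : k ≤ n) (r t : ℝ) :
    (k.factorial : ℝ) * ∑ j ∈ Finset.Icc k n, t ^ j * stirFir r n j * stirSec r j k =
      ∑ m ∈ Finset.range (k + 1), (-1 : ℝ) ^ (k - m) * (k.choose m : ℝ) *
        ∏ i ∈ Finset.range n, (r * (t + 1) + t * (m : ℝ) + (i : ℝ)) :=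
  generating_sum_rStirling_general n k r t
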